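/- Let B be a Liquid[1]_* profile over D = {0,1,*}. All rank-minimal consistent certificates of B determine the same outcome X ∈ D^N, namely: X_a = x_a if a is a direct voter; if a is delegating, follow the delegation map d from a: if this chain reaches a direct voter g (before revisiting any agent), then X_a = x_g, and if the chain enters a delegation cycle, then X_a = *. In particular, the MinSum procedure yields a unique outcome on Liquid[1]_* profiles. -/

import Mathlib

/-! Following chosen delegates from any agent, a consistent certificate always stops at an agent
using the last (direct-vote) level of its ballot, and the outcome of an agent is the vote of the
agent where its chain stops. With a single delegation per ballot this chain runs along the
delegation map. It cannot stop at a delegating agent whose delegation chain reaches a direct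
voter: switching that agent to its delegation keeps the certificate consistent and lowers its
rank. So the chain stops at the direct voter when there is one, and otherwise at a delegating
agent, whose backup vote is `*`.
-/

namespace LiquidVoting

/-- A Liquid ballot for agent `a`: levels `1, …, k-1` delegate to the pairwise
distinct delegates `d h ∈ N \ {a}` ("copy the vote of `d h`"), and level `k` is
the backup direct vote. -/
structure LiquidBallot (N D : Type*) (a : N) where
  k : ℕ
  k_pos : 1 ≤ k
  d : ℕ → N
  vote : D
  no_self : ∀ h, 1 ≤ h → h < k → d h ≠ a
  distinct : ∀ h h', 1 ≤ h → h < k → 1 ≤ h' → h' < k → d h = d h' → h = h'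

variable {N D : Type*} [Fintype N] [DecidableEq N]

/-- `c` is a certificate for the Liquid profile `B`. -/
def IsCert (B : ∀ a : N, LiquidBallot N D a) (c : N → ℕ) : Prop :=
  ∀ a, 1 ≤ c a ∧ c a ≤ (B a).k

/-- `c` is consistent: there is an enumeration of the agents in which every agent
using a delegation (`c a < k_a`) is preceded by its chosen delegate. -/
def LConsistent (B : ∀ a : N, LiquidBallot N D a) (c : N → ℕ) : Prop :=
  ∃ σ : Fin (Fintype.card N) ≃ N,
    ∀ a, c a < (B a).k → σ.symm ((B a).d (c a)) < σ.symm a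

/-- The three-valued domain `{0, 1, *}`, with `abstain` the abstention `*`. -/
inductive ThreeVote where
  | zero
  | one
  | abstain
deriving DecidableEq

/-- The rank of a certificate: the sum of the used preference levels. -/
def rank (c : N → ℕ) : ℕ := ∑ a, c a

/-- The total delegation map: a delegating agent maps to its (level-1) delegate,
a direct voter maps to itself. -/
def dmap (B : ∀ a : N, LiquidBallot N D a) : N → N :=
  fun a => if 2 ≤ (B a).k then (B a).d 1 else a

/-- `X` is the outcome determined by the consistent certificate `c`: an agent
whose certificate level is its backup direct vote gets that vote, and a delegating
agent copies the (already determined) vote of its chosen delegate. -/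
def OutcomeOf (B : ∀ a : N, LiquidBallot N D a) (c : N → ℕ)
    (X : N → D) : Prop :=
  ∀ a, (c a = (B a).k → X a = (B a).vote) ∧
    (c a < (B a).k → X a = X ((B a).d (c a)))


section Iterate

variable {α : Type*} {f g : α → α} {p : α → Prop}

theorem exists_iterate_of_rank_lt (ρ : α → ℕ) (hρ : ∀ x, ¬ p x → ρ (f x) < ρ x) (a : α) :
    ∃ m, p (f^[m] a) := by
  induction h : ρ a using Nat.strong_induction_on generalizing a with
  | _ n ih =>
    by_cases ha : p a
    · exact ⟨0, ha⟩
    · obtain ⟨m, hm⟩ := ih _ (h ▸ hρ a ha) (f a) rfl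
      exact ⟨m + 1, hm⟩

theorem exists_rank_lt_of_exists_iterate (h : ∀ a, ∃ m, p (f^[m] a)) :
    ∃ ρ : α → ℕ, ∀ x, ¬ p x → ρ (f x) < ρ x := by
  classical
  refine ⟨fun a => Nat.find (h a), fun x hx => ?_⟩
  have hpos : Nat.find (h x) ≠ 0 := fun h0 => hx (by simpa [h0] using Nat.find_spec (h x))
  have hspec : p (f^[Nat.find (h x) - 1] (f x)) := by
    rw [← Function.iterate_succ_apply, Nat.succ_eq_add_one, Nat.sub_add_cancel
      (Nat.one_le_iff_ne_zero.2 hpos)]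
    exact Nat.find_spec (h x)
  exact (Nat.find_le hspec).trans_lt (Nat.sub_one_lt hpos)

theorem exists_iterate_of_eq_outside (hfg : ∀ x, ¬ p x → f x = g x) {a : α} {n : ℕ}
    (hn : p (g^[n] a)) : ∃ m, p (f^[m] a) := by
  induction n generalizing a with
  | zero => exact ⟨0, hn⟩
  | succ n ih =>
    by_cases ha : p a
    · exact ⟨0, ha⟩
    · rw [Function.iterate_succ_apply, ← hfg a ha] at hn
      obtain ⟨m, hm⟩ := ih hn
      exact ⟨m + 1, hm⟩

theorem exists_iterate_eq_iterate (hfg : ∀ x, f x = g x ∨ f x = x) (a : α) (n : ℕ) :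
    ∃ m, f^[n] a = g^[m] a := by
  induction n with
  | zero => exact ⟨0, rfl⟩
  | succ n ih =>
    obtain ⟨m, hm⟩ := ih
    rw [Function.iterate_succ_apply', hm]
    rcases hfg (g^[m] a) with h | h
    · exact ⟨m + 1, by rw [h, Function.iterate_succ_apply']⟩
    · exact ⟨m, h⟩

theorem iterate_sub_iterate_of_isFixedPt {a : α} {m : ℕ} (hm : Function.IsFixedPt f (f^[m] a))
    (n : ℕ) : f^[m - n] (f^[n] a) = f^[m] a := by
  rw [← Function.iterate_add_apply, ← Nat.sub_add_cancel (le_tsub_add : m ≤ m - n + n),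
    Function.iterate_add_apply, Function.iterate_fixed hm]

end Iterate

theorem exists_equivFin_lt_of_lt {α : Type*} [Fintype α] (ρ : α → ℕ) :
    ∃ σ : Fin (Fintype.card α) ≃ α, ∀ x y, ρ x < ρ y → σ.symm x < σ.symm y := by
  let e := (Fintype.equivFin α).symm
  refine ⟨(Tuple.sort (ρ ∘ e)).trans e, fun x y hxy => lt_of_not_ge fun hyx => ?_⟩
  have := Tuple.monotone_sort (ρ ∘ e) hyx
  simp only [Function.comp_apply, Equiv.symm_trans_apply, Equiv.apply_symm_apply] at this
  exact this.not_gt hxy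

section Certificate

variable {ι α : Type*} (B : ∀ a : ι, LiquidBallot ι α a) (c : ι → ℕ)

def certStep : ι → ι :=
  fun a => if c a < (B a).k then (B a).d (c a) else a

theorem lConsistent_iff_exists_rank [Fintype ι] :
    LConsistent B c ↔ ∃ ρ : ι → ℕ, ∀ a, c a < (B a).k → ρ ((B a).d (c a)) < ρ a := by
  constructor
  · rintro ⟨σ, hσ⟩
    exact ⟨fun a => σ.symm a, hσ⟩
  · rintro ⟨ρ, hρ⟩
    obtain ⟨σ, hσ⟩ := exists_equivFin_lt_of_lt ρ
    exact ⟨σ, fun a ha => hσ _ _ (hρ a ha)⟩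

theorem lConsistent_iff_terminates [Fintype ι] :
    LConsistent B c ↔
      ∀ a, ∃ m, ¬ c ((certStep B c)^[m] a) < (B ((certStep B c)^[m] a)).k := by
  rw [lConsistent_iff_exists_rank]
  constructor
  · rintro ⟨ρ, hρ⟩
    refine exists_iterate_of_rank_lt (p := fun x => ¬ c x < (B x).k) ρ fun x hx => ?_
    rw [not_not] at hx
    simpa only [certStep, if_pos hx] using hρ x hx
  · intro h
    obtain ⟨ρ, hρ⟩ := exists_rank_lt_of_exists_iterate (p := fun x => ¬ c x < (B x).k) h
    exact ⟨ρ, fun a ha => by simpa only [certStep, if_pos ha] using hρ a (not_not.2 ha)⟩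

variable {B c}

theorem lConsistent_update [Fintype ι] [DecidableEq ι] (hcons : LConsistent B c) {a : ι} {v : ℕ}
    (ha : ∃ m, ¬ Function.update c a v ((certStep B (Function.update c a v))^[m] a) <
      (B ((certStep B (Function.update c a v))^[m] a)).k) :
    LConsistent B (Function.update c a v) := by
  set c' := Function.update c a v
  have hc' : ∀ x, x ≠ a → c' x = c x := fun x hx => Function.update_of_ne hx v c
  rw [lConsistent_iff_terminates] at hcons ⊢
  intro b
  obtain ⟨m, hm⟩ := hcons b
  -- follow `c` from `b` until the chain stops or reaches `a`, then follow `c'` from `a`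
  obtain ⟨j, hj | hj⟩ := exists_iterate_of_eq_outside
    (p := fun x => ¬ c' x < (B x).k ∨ x = a) (f := certStep B c') (g := certStep B c)
    (fun x hx => by
      rw [not_or] at hx
      simp only [certStep, hc' x hx.2])
    (n := m) (by
      by_cases h : (certStep B c)^[m] b = a
      · exact Or.inr h
      · exact Or.inl (hc' _ h ▸ hm))
  · exact ⟨j, hj⟩
  · obtain ⟨i, hi⟩ := ha
    exact ⟨i + j, by rwa [Function.iterate_add_apply, hj]⟩

theorem OutcomeOf.eq_iterate_certStep {X : ι → α} (hX : OutcomeOf B c X) (a : ι) (m : ℕ) :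
    X ((certStep B c)^[m] a) = X a := by
  induction m with
  | zero => rfl
  | succ m ih =>
    rw [Function.iterate_succ_apply', ← ih]
    set y := (certStep B c)^[m] a
    by_cases hy : c y < (B y).k
    · rw [certStep, if_pos hy, (hX y).2 hy]
    · rw [certStep, if_neg hy]

theorem OutcomeOf.eq_vote {X : ι → α} (hX : OutcomeOf B c X) (hc : IsCert B c) {a : ι}
    (ha : ¬ c a < (B a).k) : X a = (B a).vote :=
  (hX a).1 (le_antisymm (hc a).2 (not_lt.1 ha))

end Certificate

section SingleDelegation

variable {ι α : Type*} {B : ∀ a : ι, LiquidBallot ι α a} {c : ι → ℕ}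

theorem dmap_eq_self {a : ι} (ha : (B a).k = 1) : dmap B a = a := by
  simp [dmap, ha]

theorem certStep_eq_dmap (hk : ∀ a, (B a).k ≤ 2) (hc : IsCert B c) {a : ι}
    (ha : c a < (B a).k) : certStep B c a = dmap B a := by
  have h : c a = 1 ∧ (B a).k = 2 := by have := hc a; have := hk a; omega
  simp [certStep, dmap, h]

theorem exists_outcome_eq_vote_iterate_dmap [Fintype ι] (hk : ∀ a, (B a).k ≤ 2)
    (hc : IsCert B c) (hcons : LConsistent B c) {X : ι → α} (hX : OutcomeOf B c X) (a : ι) :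
    ∃ i, ¬ c ((dmap B)^[i] a) < (B ((dmap B)^[i] a)).k ∧ X a = (B ((dmap B)^[i] a)).vote := by
  obtain ⟨n, hn⟩ := (lConsistent_iff_terminates B c).1 hcons a
  have hstep : ∀ x, certStep B c x = dmap B x ∨ certStep B c x = x := fun x => by
    by_cases hx : c x < (B x).k
    · exact Or.inl (certStep_eq_dmap hk hc hx)
    · exact Or.inr (if_neg hx)
  obtain ⟨i, hi⟩ := exists_iterate_eq_iterate hstep a n
  rw [hi] at hn
  exact ⟨i, hn, by rw [← hX.eq_iterate_certStep a n, hi, hX.eq_vote hc hn]⟩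

theorem eq_one_of_rank_minimal [Fintype ι] [DecidableEq ι] (hk : ∀ a, (B a).k ≤ 2)
    (hc : IsCert B c) (hcons : LConsistent B c)
    (hmin : ∀ c', IsCert B c' → LConsistent B c' → rank c ≤ rank c')
    {a : ι} (ha : (B a).k = 2) {p : ℕ} (hp : (B ((dmap B)^[p] a)).k = 1) : c a = 1 := by
  by_contra hne
  set c' := Function.update c a 1
  have hc' : IsCert B c' := fun b => by
    rcases eq_or_ne b a with rfl | hb
    · simp [c', (B b).k_pos]
    · simpa [c', hb] using hc b
  have hlt : rank c' < rank c := by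
    refine Finset.sum_lt_sum (fun b _ => ?_) ⟨a, Finset.mem_univ a, ?_⟩
    · rcases eq_or_ne b a with rfl | hb
      · simpa [c'] using (hc b).1
      · simp [c', hb]
    · have := (hc a).1
      simp only [c', Function.update_self]
      omega
  have hchain : ∃ m, ¬ c' ((certStep B c')^[m] a) < (B ((certStep B c')^[m] a)).k :=
    exists_iterate_of_eq_outside (p := fun x => ¬ c' x < (B x).k) (g := dmap B)
      (fun x hx => certStep_eq_dmap hk hc' (not_not.1 hx)) (n := p) (by
        have := (hc' ((dmap B)^[p] a)).1
        omega)
  exact (hmin c' hc' (lConsistent_update hcons hchain)).not_gt hlt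

end SingleDelegation

/-- On Liquid[1]_* profiles (single optional delegation, backup vote `*`), all
rank-minimal consistent certificates determine the same outcome: a direct voter
keeps its vote; a delegating agent whose delegation chain reaches a direct voter
`g` gets `g`'s vote; and a delegating agent whose chain enters a delegation cycle
abstains. In particular `MinSum` yields a unique outcome on such profiles. -/
theorem minSum_unique_outcome_liquid1star
    (B : ∀ a : N, LiquidBallot N ThreeVote a)
    (hB : ∀ a, (B a).k ≤ 2 ∧ ((B a).k = 2 → (B a).vote = ThreeVote.abstain))
    (c : N → ℕ) (hc : IsCert B c) (hcons : LConsistent B c)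
    (hmin : ∀ c', IsCert B c' → LConsistent B c' → rank c ≤ rank c')
    (X : N → ThreeVote) (hX : OutcomeOf B c X) :
    (∀ (a : N) (m : ℕ), (B ((dmap B)^[m] a)).k = 1 →
      X a = (B ((dmap B)^[m] a)).vote) ∧
    (∀ a : N, (∀ m : ℕ, (B ((dmap B)^[m] a)).k ≠ 1) →
      X a = ThreeVote.abstain) := by
  have hk : ∀ a, (B a).k ≤ 2 := fun a => (hB a).1
  have hk2 : ∀ a, (B a).k ≠ 1 → (B a).k = 2 := fun a h => by
    have := (B a).k_pos; have := hk a; omega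
  refine ⟨fun a m hm => ?_, fun a hall => ?_⟩
  · obtain ⟨i, hi, hXa⟩ := exists_outcome_eq_vote_iterate_dmap hk hc hcons hX a
    set t := (dmap B)^[i] a
    have hreach : (dmap B)^[m - i] t = (dmap B)^[m] a :=
      iterate_sub_iterate_of_isFixedPt (dmap_eq_self hm) i
    have ht : (B t).k = 1 := by
      by_contra h
      have h2 := hk2 t h
      have := eq_one_of_rank_minimal hk hc hcons hmin h2 (p := m - i) (hreach ▸ hm)
      omega
    rwa [← hreach, Function.iterate_fixed (dmap_eq_self ht)]
  · obtain ⟨i, -, hXa⟩ := exists_outcome_eq_vote_iterate_dmap hk hc hcons hX a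
    rw [hXa, (hB _).2 (hk2 _ (hall i))]

end LiquidVoting
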